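/- arXiv:2008.11180 — 3 statements merged into one kernel-verified Lean document; each statement's English description precedes it below -/
import Mathlib

section
/- Let X : Δ^op → C be a simplicial object in a category C with pullbacks whose Segal maps X_k → X_1 ×_{X_0} ⋯ ×_{X_0} X_1 (k factors) are isomorphisms for all k ≥ 2. Then X is isomorphic to the nerve of an internal category in C. Conversely, the nerve of an internal category has invertible Segal maps. -/
/-!
A strict Segal simplicial set `X` carries a category structure on its vertices whose morphisms
are the edges: the composite of two composable edges is the long edge of the unique 2-simplex
with that spine, degenerate 2-simplices give the unit laws, and the unique 3-simplex spanned by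
three composable edges gives associativity. Its nerve is again strict Segal, so comparing the
two on edges gives an isomorphism of 2-truncations; both simplicial sets are 2-coskeletal, hence
isomorphic. Conversely, nerves are strict Segal and the strict Segal condition is invariant
under isomorphism.
-/

open CategoryTheory Simplicial SimplexCategory

universe u

namespace SSet

variable {X : SSet.{u}}

lemma δ_δ_apply {n : ℕ} (i : Fin (n + 2)) (j : Fin (n + 3)) (t : X _⦋n + 2⦌) :
    X.δ i (X.δ j t) = X.map (SimplexCategory.δ i ≫ SimplexCategory.δ j).op t := by
  rw [op_comp, Functor.map_comp_apply]
  rfl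

lemma δ_δ_apply_eq {n : ℕ} {i k : Fin (n + 2)} {j l : Fin (n + 3)}
    (h : SimplexCategory.δ i ≫ SimplexCategory.δ j = SimplexCategory.δ k ≫ SimplexCategory.δ l)
    (t : X _⦋n + 2⦌) : X.δ i (X.δ j t) = X.δ k (X.δ l t) := by
  rw [δ_δ_apply, δ_δ_apply, h]

lemma spine_app {Y : SSet.{u}} (f : X ⟶ Y) (n : ℕ) (x : X _⦋n⦌) :
    Y.spine n (f.app _ x) = (X.spine n x).map f := by
  ext i <;> exact (NatTrans.naturality_apply f _ x).symm

lemma Path.map_bijective_of_iso {Y : SSet.{u}} (e : X ≅ Y) (n : ℕ) :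
    Function.Bijective (fun p : Path X n ↦ p.map e.hom) := by
  refine Function.bijective_iff_has_inverse.2 ⟨fun p ↦ p.map e.inv, fun p ↦ ?_, fun p ↦ ?_⟩
  · change p.map (e.hom ≫ e.inv) = p
    rw [e.hom_inv_id]
    rfl
  · change p.map (e.inv ≫ e.hom) = p
    rw [e.inv_hom_id]
    rfl

lemma IsStrictSegal.of_iso {Y : SSet.{u}} (e : X ≅ Y) [Y.IsStrictSegal] : X.IsStrictSegal where
  segal n := by
    have spine_eq : X.spine n = (fun p ↦ p.map e.inv) ∘ Y.spine n ∘ e.hom.app _ := by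
      funext x
      change X.spine n x = (Y.spine n (e.hom.app _ x)).map e.inv
      rw [spine_app]
      change _ = (X.spine n x).map (e.hom ≫ e.inv)
      rw [e.hom_inv_id]
      rfl
    rw [spine_eq]
    exact (Path.map_bijective_of_iso e.symm n).comp
      ((IsStrictSegal.segal n).comp ((isIso_iff_bijective _).1 inferInstance))

section StrictSegal

variable [X.IsStrictSegal]

lemma IsStrictSegal.ext₂ {s t : X _⦋2⦌} (h₂ : X.δ 2 s = X.δ 2 t) (h₀ : X.δ 0 s = X.δ 0 t) :
    s = t := by
  refine (IsStrictSegal.segal 2).injective (Path.ext' fun i ↦ ?_)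
  fin_cases i
  · change X.map (mkOfSucc 0).op s = X.map (mkOfSucc 0).op t
    rwa [mkOfSucc_zero_eq_δ]
  · change X.map (mkOfSucc 1).op s = X.map (mkOfSucc 1).op t
    rwa [mkOfSucc_one_eq_δ]

namespace Edge

variable {x₀ x₁ x₂ x₃ : X _⦋0⦌}

lemma exists_simplex₂ (f : Edge x₀ x₁) (g : Edge x₁ x₂) :
    ∃ s : X _⦋2⦌, X.δ 2 s = f.edge ∧ X.δ 0 s = g.edge := by
  obtain ⟨s, hs⟩ := (IsStrictSegal.segal 2).2
    ⟨![x₀, x₁, x₂], ![f.edge, g.edge], fun i ↦ by fin_cases i; exacts [f.src_eq, g.src_eq],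
      fun i ↦ by fin_cases i; exacts [f.tgt_eq, g.tgt_eq]⟩
  have h₂ : X.map (mkOfSucc 0).op s = f.edge := Path.congr_arrow hs 0
  have h₀ : X.map (mkOfSucc 1).op s = g.edge := Path.congr_arrow hs 1
  rw [mkOfSucc_zero_eq_δ] at h₂
  rw [mkOfSucc_one_eq_δ] at h₀
  exact ⟨s, h₂, h₀⟩

lemma exists_simplex₃ (f : Edge x₀ x₁) (g : Edge x₁ x₂) (h : Edge x₂ x₃) :
    ∃ t : X _⦋3⦌, X.map (mkOfSucc 0).op t = f.edge ∧ X.map (mkOfSucc 1).op t = g.edge ∧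
      X.map (mkOfSucc 2).op t = h.edge := by
  obtain ⟨t, ht⟩ := (IsStrictSegal.segal 3).2
    ⟨![x₀, x₁, x₂, x₃], ![f.edge, g.edge, h.edge],
      fun i ↦ by fin_cases i; exacts [f.src_eq, g.src_eq, h.src_eq],
      fun i ↦ by fin_cases i; exacts [f.tgt_eq, g.tgt_eq, h.tgt_eq]⟩
  exact ⟨t, Path.congr_arrow ht 0, Path.congr_arrow ht 1, Path.congr_arrow ht 2⟩

lemma exists_compStruct (f : Edge x₀ x₁) (g : Edge x₁ x₂) :
    ∃ h : Edge x₀ x₂, Nonempty (CompStruct f g h) := by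
  obtain ⟨s, h₂, h₀⟩ := exists_simplex₂ f g
  have src : X.δ 1 (X.δ 1 s) = x₀ := by
    rw [δ_δ_apply_eq (show δ 1 ≫ δ 1 = δ 1 ≫ δ 2 by decide), h₂, f.src_eq]
  have tgt : X.δ 0 (X.δ 1 s) = x₂ := by
    rw [δ_δ_apply_eq (show δ 0 ≫ δ 1 = δ 0 ≫ δ 0 by decide), h₀, g.tgt_eq]
  exact ⟨mk (X.δ 1 s), ⟨CompStruct.mk s h₂ h₀ rfl⟩⟩

noncomputable def segalComp (f : Edge x₀ x₁) (g : Edge x₁ x₂) : Edge x₀ x₂ :=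
  (exists_compStruct f g).choose

lemma segalComp_edge {f : Edge x₀ x₁} {g : Edge x₁ x₂} (s : X _⦋2⦌)
    (h₂ : X.δ 2 s = f.edge) (h₀ : X.δ 0 s = g.edge) : (f.segalComp g).edge = X.δ 1 s := by
  obtain ⟨σ⟩ := (exists_compStruct f g).choose_spec
  change (exists_compStruct f g).choose.edge = _
  rw [← σ.d₁, IsStrictSegal.ext₂ (σ.d₂.trans h₂.symm) (σ.d₀.trans h₀.symm)]

lemma CompStruct.eq_segalComp {f : Edge x₀ x₁} {g : Edge x₁ x₂} {h : Edge x₀ x₂}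
    (σ : CompStruct f g h) : h = f.segalComp g :=
  Edge.ext (σ.d₁.symm.trans (segalComp_edge _ σ.d₂ σ.d₀).symm)

lemma segalComp_assoc (f : Edge x₀ x₁) (g : Edge x₁ x₂) (h : Edge x₂ x₃) :
    (f.segalComp g).segalComp h = f.segalComp (g.segalComp h) := by
  obtain ⟨t, hf, hg, hh⟩ := exists_simplex₃ f g h
  -- The faces `δ 3 t`, `δ 0 t`, `δ 1 t`, `δ 2 t` witness the composites `f g`, `g h`,
  -- `(f g) h` and `f (g h)`; the last two share the long edge of `t`.
  have face {i : Fin 3} {j : Fin 4} {α : ⦋1⦌ ⟶ ⦋3⦌} (hα : δ i ≫ δ j = α) :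
      X.δ i (X.δ j t) = X.map α.op t := by
    rw [δ_δ_apply, hα]
  have fg : (f.segalComp g).edge = X.δ 1 (X.δ 3 t) :=
    segalComp_edge _ (by rwa [face (α := mkOfSucc 0) (by decide)])
      (by rwa [face (α := mkOfSucc 1) (by decide)])
  have gh : (g.segalComp h).edge = X.δ 1 (X.δ 0 t) :=
    segalComp_edge _ (by rwa [face (α := mkOfSucc 1) (by decide)])
      (by rwa [face (α := mkOfSucc 2) (by decide)])
  refine Edge.ext ?_
  rw [segalComp_edge (X.δ 1 t) (by rw [fg]; exact δ_δ_apply_eq (by decide) t)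
      (by rwa [face (α := mkOfSucc 2) (by decide)]),
    segalComp_edge (X.δ 2 t) (by rwa [face (α := mkOfSucc 0) (by decide)])
      (by rw [gh]; exact δ_δ_apply_eq (by decide) t)]
  exact δ_δ_apply_eq (by decide) t

end Edge

def EdgeCategory (X : SSet.{u}) : Type u := X _⦋0⦌

noncomputable instance : SmallCategory (EdgeCategory X) where
  Hom x y := Edge (X := X) x y
  id x := Edge.id (X := X) x
  comp f g := f.segalComp g
  id_comp f := (Edge.CompStruct.idComp f).eq_segalComp.symm
  comp_id f := (Edge.CompStruct.compId f).eq_segalComp.symm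
  assoc := Edge.segalComp_assoc

namespace EdgeCategory

variable (X)

noncomputable def ofHomotopyCategory :
    ((truncation 2).obj X).HomotopyCategory ⥤ EdgeCategory X :=
  Truncated.HomotopyCategory.lift (fun x ↦ x) (fun e ↦ Edge.ofTruncated e)
    (fun _ ↦ rfl) (fun σ ↦ (Edge.CompStruct.ofTruncated σ).eq_segalComp.symm)

lemma ofHomotopyCategory_map_homMk {x y : X _⦋0⦌}
    (e : Truncated.Edge (X := (truncation 2).obj X) x y) :
    (ofHomotopyCategory X).map (Truncated.HomotopyCategory.homMk e) = Edge.ofTruncated e :=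
  Category.id_comp _

noncomputable def toNerveTruncation :
    (truncation 2).obj X ⟶ (truncation 2).obj (nerve (EdgeCategory X)) :=
  Truncated.HomotopyCategory.homToNerveMk (ofHomotopyCategory X)

noncomputable def fromNerveTruncation :
    (truncation 2).obj (nerve (EdgeCategory X)) ⟶ (truncation 2).obj X :=
  Truncated.liftOfStrictSegal nerveEquiv (fun F ↦ Edge.edge (X := X) F.hom)
    (fun _ ↦ (Edge.src_eq _).symm) (fun _ ↦ (Edge.tgt_eq _).symm)
    (fun (F : ComposableArrows (EdgeCategory X) 2) (s : X _⦋2⦌) h₂ h₀ ↦ by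
      change (F.map' 0 1).edge = X.δ 2 s at h₂
      change (F.map' 1 2).edge = X.δ 0 s at h₀
      exact (congrArg (Edge.edge (X := X)) (F.map'_comp 0 1 2)).trans
        (Edge.segalComp_edge s h₂.symm h₀.symm))
    (fun (x : ComposableArrows (EdgeCategory X) 0) ↦
      congrArg (Edge.edge (X := X)) (x.map'_self 0))
    ((StrictSegal.ofIsStrictSegal X).truncation 1)

noncomputable def truncationIso :
    (truncation 2).obj X ≅ (truncation 2).obj (nerve (EdgeCategory X)) where
  hom := toNerveTruncation X
  inv := fromNerveTruncation X
  hom_inv_id := Truncated.IsStrictSegal.hom_ext fun x ↦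
    congrArg (Edge.edge (X := X)) (Category.id_comp (obj := EdgeCategory X) (Edge.mk' (X := X) x))
  inv_hom_id := Truncated.IsStrictSegal.hom_ext fun F ↦
    (Truncated.HomotopyCategory.homToNerveMk_app_edge _
      (Edge.toTruncated (F : ComposableArrows (EdgeCategory X) 1).hom)).trans
      ((congrArg ComposableArrows.mk₁ (ofHomotopyCategory_map_homMk X _)).trans
        (ComposableArrows.mk₁_hom F))

noncomputable def isoNerve : X ≅ nerve (EdgeCategory X) :=
  X.isoCoskOfIsCoskeletal 2 ≪≫ (Truncated.cosk 2).mapIso (truncationIso X) ≪≫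
    ((nerve (EdgeCategory X)).isoCoskOfIsCoskeletal 2).symm

end EdgeCategory

end StrictSegal

theorem isStrictSegal_iff_nonempty_iso_nerve :
    X.IsStrictSegal ↔ ∃ (C : Type u) (_ : SmallCategory C), Nonempty (X ≅ nerve C) :=
  ⟨fun _ ↦ ⟨_, _, ⟨EdgeCategory.isoNerve X⟩⟩, fun ⟨_, _, ⟨e⟩⟩ ↦ IsStrictSegal.of_iso e⟩

end SSet

theorem stmt_4 (X : SSet.{u}) :
    Nonempty (SSet.StrictSegal X) ↔
      ∃ (C : Type u) (_ : SmallCategory C), Nonempty (X ≅ nerve C) := by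
  rw [← SSet.isStrictSegal_iff_nonempty_iso_nerve]
  exact ⟨fun ⟨sx⟩ ↦ sx.isStrictSegal, fun _ ↦ ⟨.ofIsStrictSegal X⟩⟩
end

section
/- Let X be a weakly globular double category, i.e. a simplicial object in Cat with X_0 homotopically discrete, Segal maps isomorphisms, and induced Segal maps X_k → X_1 ×_{X_0^d} ⋯ ×_{X_0^d} X_1 equivalences of categories. Define ∂'_i on the objects (X_0^d, X_1, X_1 ×_{X_0^d} ⋯ ×_{X_0^d} X_1) by ∂'_i = γ∂_i for k=1, ∂'_i = ∂_i ν_2 for k=2, and ∂'_i = μ̂_{k−1} ∂_i ν_k for k > 2, where ν_k is the pseudo-inverse of the induced Segal map μ̂_k with ν_k μ̂_k = id. Then the maps ∂'_i satisfy the semi-simplicial identities ∂'_i ∂'_j = ∂'_{j−1} ∂'_i for i < j. -/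
/-!
STATEMENT 8: Let `X` be a weakly globular double category (given by levels `C n`, face
functors `δ`, homotopically discrete `C 0` with discretization `γ`, and induced Segal
maps `μ̂_k : X_k ⥤ X₁ ×_{X₀ᵈ} ⋯ ×_{X₀ᵈ} X₁` which are equivalences, injective on
objects, with pseudo-inverses `ν_k` satisfying `ν_k μ̂_k = id`).  Define
`∂'_i = γ∂_i` on `X₁`, `∂'_i = ∂_i ν₂` on `X₁ ×_{X₀ᵈ} X₁` and
`∂'_i = μ̂_{k-1} ∂_i ν_k` for `k > 2`.  Then the `∂'_i` satisfy the semi-simplicial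
identities `∂'_i ∂'_j = ∂'_{j-1} ∂'_i` for `i < j` (stated in the three cases of levels
`2 → 1 → 0`, `3 → 2 → 1` and `k+1 → k → k-1` for `k ≥ 3`).
-/

open CategoryTheory

universe v u

/-- Isomorphism classes of objects. -/
def pSet (C : Type u) [Category.{v} C] : Type u :=
  Quotient (CategoryTheory.isIsomorphicSetoid C)

/-- The iterated strict fiber product `A ×_{Discrete S} ⋯ ×_{Discrete S} A` of length
`k` of a category `A` with "target" and "source" maps `a, b : A ⥤ Discrete S` to a
discrete category: objects are `k`-tuples of objects of `A` whose consecutive members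
match in `Discrete S`.  (As the base is discrete, no condition is needed on
morphisms.) -/
structure DChain {A : Type u} [Category.{v} A] {S : Type u}
    (a b : A ⥤ Discrete S) (k : ℕ) : Type u where
  obj : Fin k → A
  w : ∀ (i : ℕ) (h : i + 1 < k),
    a.obj (obj ⟨i, Nat.lt_of_succ_lt h⟩) = b.obj (obj ⟨i + 1, h⟩)

instance {A : Type u} [Category.{v} A] {S : Type u} (a b : A ⥤ Discrete S) (k : ℕ) :
    Category (DChain a b k) where
  Hom x y := ∀ i, x.obj i ⟶ y.obj i
  id _ := fun _ => 𝟙 _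
  comp f g := fun i => f i ≫ g i
  id_comp f := by funext i; simp
  comp_id f := by funext i; simp
  assoc f g h := by funext i; simp

theorem stmt_8 (C : ℕ → Type u) [∀ n, Category.{v} (C n)]
    -- the face functors of the simplicial object `X` in `Cat` ...
    (δ : ∀ n, ℕ → (C (n + 1) ⥤ C n))
    -- ... satisfying the simplicial face identities
    (hδ : ∀ n i j : ℕ, i < j → j ≤ n + 2 →
      δ (n + 1) j ⋙ δ n i = δ (n + 1) i ⋙ δ n (j - 1))
    -- `X₀` is homotopically discrete, with discretization `γ : X₀ ⥤ X₀ᵈ`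
    (hsub : ∀ a b : C 0, Subsingleton (a ⟶ b))
    (hgrp : ∀ (a b : C 0) (f : a ⟶ b), IsIso f)
    (γ : C 0 ⥤ Discrete (pSet (C 0)))
    (hγ : ∀ x : C 0, γ.obj x = ⟨Quotient.mk _ x⟩)
    -- the induced Segal maps `μ̂_{k+2}`, which are equivalences of categories ...
    (μ : ∀ k : ℕ, C (k + 2) ⥤ DChain (δ 0 0 ⋙ γ) (δ 0 1 ⋙ γ) (k + 2))
    (hμeq : ∀ k, (μ k).IsEquivalence)
    -- ... with pseudo-inverses `ν_{k+2}` satisfying `ν_k ∘ μ̂_k = id`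
    (ν : ∀ k : ℕ, DChain (δ 0 0 ⋙ γ) (δ 0 1 ⋙ γ) (k + 2) ⥤ C (k + 2))
    (hμν : ∀ k, μ k ⋙ ν k = 𝟭 (C (k + 2)))
    (hνμ : ∀ k, Nonempty (ν k ⋙ μ k ≅ 𝟭 (DChain (δ 0 0 ⋙ γ) (δ 0 1 ⋙ γ) (k + 2)))) :
    -- the maps `∂'` satisfy the semi-simplicial identities `∂'_i ∂'_j = ∂'_{j-1} ∂'_i`:
    -- (a) levels `2 → 1 → 0`
    (∀ i j : ℕ, i < j → j ≤ 2 →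
      (ν 0 ⋙ δ 1 j) ⋙ (δ 0 i ⋙ γ) = (ν 0 ⋙ δ 1 i) ⋙ (δ 0 (j - 1) ⋙ γ)) ∧
    -- (b) levels `3 → 2 → 1`
    (∀ i j : ℕ, i < j → j ≤ 3 →
      (ν 1 ⋙ δ 2 j ⋙ μ 0) ⋙ (ν 0 ⋙ δ 1 i) = (ν 1 ⋙ δ 2 i ⋙ μ 0) ⋙ (ν 0 ⋙ δ 1 (j - 1))) ∧
    -- (c) levels `k+1 → k → k-1` for `k > 2`
    (∀ k i j : ℕ, i < j → j ≤ k + 4 →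
      (ν (k + 2) ⋙ δ (k + 3) j ⋙ μ (k + 1)) ⋙ (ν (k + 1) ⋙ δ (k + 2) i ⋙ μ k) =
        (ν (k + 2) ⋙ δ (k + 3) i ⋙ μ (k + 1)) ⋙ (ν (k + 1) ⋙ δ (k + 2) (j - 1) ⋙ μ k)) := by
  refine ⟨?_, ?_, ?_⟩
  · intro i j hij hj
    have h := hδ 0 i j hij (by omega)
    show ν 0 ⋙ (δ 1 j ⋙ δ 0 i) ⋙ γ = ν 0 ⋙ (δ 1 i ⋙ δ 0 (j - 1)) ⋙ γ
    rw [h]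
  · intro i j hij hj
    have h := hδ 1 i j hij (by omega)
    show ν 1 ⋙ δ 2 j ⋙ (μ 0 ⋙ ν 0) ⋙ δ 1 i = ν 1 ⋙ δ 2 i ⋙ (μ 0 ⋙ ν 0) ⋙ δ 1 (j - 1)
    rw [hμν 0]
    show ν 1 ⋙ (δ 2 j ⋙ δ 1 i) = ν 1 ⋙ (δ 2 i ⋙ δ 1 (j - 1))
    rw [h]
  · intro k i j hij hj
    have h := hδ (k + 2) i j hij (by omega)
    show ν (k + 2) ⋙ δ (k + 3) j ⋙ (μ (k + 1) ⋙ ν (k + 1)) ⋙ δ (k + 2) i ⋙ μ k =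
      ν (k + 2) ⋙ δ (k + 3) i ⋙ (μ (k + 1) ⋙ ν (k + 1)) ⋙ δ (k + 2) (j - 1) ⋙ μ k
    rw [hμν (k + 1)]
    show ν (k + 2) ⋙ (δ (k + 3) j ⋙ δ (k + 2) i) ⋙ μ k =
      ν (k + 2) ⋙ (δ (k + 3) i ⋙ δ (k + 2) (j - 1)) ⋙ μ k
    rw [h]
end

section
/- Let C, D be small categories, Z a discrete category, s : C → Z a functor with C homotopically discrete and the discretization γ : C → Z (so Z = C^d). Then the inclusion (id, section) functor C ×_{C} D = D → C ×_{Z} D induced by a section of γ is an equivalence of categories whenever the induced Segal map μ̂_2 : C ×_{C} D → C ×_{Z} D is an equivalence; consequently, in a weakly globular double category X, the composite c ∘ ν_2 ∘ (σ_0, id) : X_0 ×_{X_0^d} X_1 → X_1 is an equivalence of categories, where c is the composition X_1 ×_{X_0} X_1 → X_1 and σ_0 the degeneracy. -/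
/-!
STATEMENT 11: Part 1: let `C` be homotopically discrete with discretization
`γ : C ⥤ Z = Discrete (p C)`, let `F : D ⥤ C`, and let `ι` be a section of `γ`.  Then
the inclusion functor `D = C ×_C D ⥤ C ×_Z D` induced by the section (i.e.
`d ↦ (ι γ F d, d)`) is an equivalence of categories whenever the induced Segal map
`μ̂₂ : C ×_C D = D → C ×_Z D, d ↦ (F d, d)` is an equivalence.

Part 2 ("consequently"): in a weakly globular double category `X`, the composite
`c ∘ ν₂ ∘ (σ₀, id) : X₀ ×_{X₀ᵈ} X₁ ⥤ X₁` is an equivalence of categories, where `c` is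
the composition `X₁ ×_{X₀} X₁ ⥤ X₁` (satisfying the unit law `c(σ₀ ∂₁, id) = id`), `σ₀`
the degeneracy, and `ν₂` the pseudo-inverse (with `ν₂ μ̂₂ = id`) of the induced Segal map
`μ̂₂ : X₁ ×_{X₀} X₁ ⥤ X₁ ×_{X₀ᵈ} X₁`, which is an equivalence.
-/

open CategoryTheory

universe v v' u

/-- Strict pullback over a discrete base. -/
structure DPb {X Y : Type u} [Category.{v} X] [Category.{v'} Y] {S : Type u}
    (F : X ⥤ Discrete S) (G : Y ⥤ Discrete S) : Type u where
  left : X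
  right : Y
  w : F.obj left = G.obj right

namespace DPb

variable {X Y : Type u} [Category.{v} X] [Category.{v'} Y] {S : Type u}
  {F : X ⥤ Discrete S} {G : Y ⥤ Discrete S}

instance : Category (DPb F G) where
  Hom a b := (a.left ⟶ b.left) × (a.right ⟶ b.right)
  id _ := ⟨𝟙 _, 𝟙 _⟩
  comp f g := ⟨f.1 ≫ g.1, f.2 ≫ g.2⟩
  id_comp f := by dsimp; simp
  comp_id f := by dsimp; simp
  assoc f g h := by dsimp; simp

end DPb

section

variable {C₀ C₁ : Type u} [Category.{v} C₀] [Category.{v} C₁]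

/-- The strict fiber product `X₁ ×_{X₀} X₁` of composable pairs. -/
structure Chain2 (d₀ d₁ : C₁ ⥤ C₀) : Type max u v where
  f : C₁
  g : C₁
  w : d₀.obj f = d₁.obj g

variable (d₀ d₁ : C₁ ⥤ C₀)

instance : Category (Chain2 d₀ d₁) where
  Hom x y := {p : (x.f ⟶ y.f) × (x.g ⟶ y.g) //
    d₀.map p.1 = eqToHom x.w ≫ d₁.map p.2 ≫ eqToHom y.w.symm}
  id x := ⟨⟨𝟙 _, 𝟙 _⟩, by simp⟩
  comp p q := ⟨⟨p.1.1 ≫ q.1.1, p.1.2 ≫ q.1.2⟩, by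
    rw [Functor.map_comp, Functor.map_comp, p.2, q.2]; simp⟩
  id_comp f := by apply Subtype.ext; dsimp; simp
  comp_id f := by apply Subtype.ext; dsimp; simp
  assoc f g h := by apply Subtype.ext; dsimp; simp

variable (γ : C₀ ⥤ Discrete (pSet C₀))

/-- The induced Segal map `μ̂₂ : X₁ ×_{X₀} X₁ ⥤ X₁ ×_{X₀ᵈ} X₁`. -/
def Mu2 : Chain2 d₀ d₁ ⥤ DPb (d₀ ⋙ γ) (d₁ ⋙ γ) where
  obj z := ⟨z.f, z.g, congrArg γ.obj z.w⟩
  map p := ⟨p.1.1, p.1.2⟩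

variable (σ₀ : C₀ ⥤ C₁) (hσ₀ : σ₀ ⋙ d₀ = 𝟭 C₀) (hσ₁ : σ₀ ⋙ d₁ = 𝟭 C₀)

/-- The functor `(σ₀ ∂₁, id) : X₁ = X₀ ×_{X₀} X₁ ⥤ X₁ ×_{X₀} X₁`. -/
def unitL : C₁ ⥤ Chain2 d₀ d₁ where
  obj f := ⟨σ₀.obj (d₁.obj f), f, Functor.congr_obj hσ₀ (d₁.obj f)⟩
  map φ := ⟨⟨σ₀.map (d₁.map φ), φ⟩,
    Functor.congr_hom
      (show (d₁ ⋙ σ₀) ⋙ d₀ = d₁ from by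
        calc (d₁ ⋙ σ₀) ⋙ d₀ = d₁ ⋙ (σ₀ ⋙ d₀) := rfl
          _ = d₁ ⋙ 𝟭 C₀ := by rw [hσ₀]
          _ = d₁ := d₁.comp_id) φ⟩
  map_id f := Subtype.ext (Prod.ext (by dsimp; rw [d₁.map_id, σ₀.map_id]; rfl) rfl)
  map_comp φ ψ := Subtype.ext (Prod.ext (by dsimp; rw [d₁.map_comp, σ₀.map_comp]; rfl) rfl)

/-- The functor `(σ₀, id) : X₀ ×_{X₀ᵈ} X₁ ⥤ X₁ ×_{X₀ᵈ} X₁`. -/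
def inclSigma : DPb γ (d₁ ⋙ γ) ⥤ DPb (d₀ ⋙ γ) (d₁ ⋙ γ) where
  obj a := ⟨σ₀.obj a.left, a.right,
    (congrArg γ.obj (Functor.congr_obj hσ₀ a.left)).trans a.w⟩
  map f := ⟨σ₀.map f.1, f.2⟩
  map_id _ := Prod.ext (σ₀.map_id _) rfl
  map_comp _ _ := Prod.ext (σ₀.map_comp _ _) rfl

end

section Part1

variable {C₀ D : Type u} [Category.{v} C₀] [Category.{v} D]
  (γ : C₀ ⥤ Discrete (pSet C₀)) (F : D ⥤ C₀)

/-- The canonical functor `D = C ×_C D ⥤ C ×_Z D`, `d ↦ (F d, d)` (the induced Segal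
map). -/
def MuD : D ⥤ DPb γ (F ⋙ γ) where
  obj d := ⟨F.obj d, d, rfl⟩
  map g := ⟨F.map g, g⟩
  map_id _ := Prod.ext (F.map_id _) rfl
  map_comp _ _ := Prod.ext (F.map_comp _ _) rfl

/-- The inclusion `D ⥤ C ×_Z D` induced by a section `ι` of `γ`:
`d ↦ (ι γ F d, d)`. -/
def inclD (ι : Discrete (pSet C₀) ⥤ C₀) (hι : ι ⋙ γ = 𝟭 (Discrete (pSet C₀))) :
    D ⥤ DPb γ (F ⋙ γ) where
  obj d := ⟨ι.obj (γ.obj (F.obj d)), d, Functor.congr_obj hι (γ.obj (F.obj d))⟩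
  map g := ⟨ι.map (γ.map (F.map g)), g⟩
  map_id _ := Prod.ext (by dsimp; rw [F.map_id, γ.map_id, ι.map_id]; rfl) rfl
  map_comp _ _ := Prod.ext (by dsimp; rw [F.map_comp, γ.map_comp, ι.map_comp]; rfl) rfl

end Part1

/-!
Since `C₀` is homotopically discrete, `γ x = γ y` forces a unique isomorphism `x ≅ y`. Hence
`MuD γ F` is an equivalence for every `F`, and it is isomorphic to the inclusion through any
section of `γ`. For the second part, `(σ₀, id) ∘ MuD γ d₁ = μ̂₂ ∘ (σ₀ ∂₁, id)`, so precomposing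
`c ∘ ν₂ ∘ (σ₀, id)` with the equivalence `MuD γ d₁` gives `c ∘ (σ₀ ∂₁, id) = id`; two out of
three finishes.
-/

namespace DPb

variable {X Y : Type u} [Category.{v} X] [Category.{v'} Y] {S : Type u}
  {F : X ⥤ Discrete S} {G : Y ⥤ Discrete S}

def isoMk {a b : DPb F G} (l : a.left ≅ b.left) (r : a.right ≅ b.right) : a ≅ b where
  hom := (l.hom, r.hom)
  inv := (l.inv, r.inv)
  hom_inv_id := Prod.ext l.hom_inv_id r.hom_inv_id
  inv_hom_id := Prod.ext l.inv_hom_id r.inv_hom_id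

end DPb

section HomotopicallyDiscrete

variable {C₀ D : Type u} [Category.{v} C₀] [Category.{v} D] {γ : C₀ ⥤ Discrete (pSet C₀)}

theorem nonempty_iso_of_obj_eq (hγ : ∀ x : C₀, γ.obj x = ⟨Quotient.mk _ x⟩) {x y : C₀}
    (h : γ.obj x = γ.obj y) : Nonempty (x ≅ y) := by
  rw [hγ x, hγ y] at h
  exact Quotient.exact (congrArg Discrete.as h)

noncomputable def muDIsoInclD (hsub : ∀ a b : C₀, Subsingleton (a ⟶ b))
    (hγ : ∀ x : C₀, γ.obj x = ⟨Quotient.mk _ x⟩) (F : D ⥤ C₀)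
    (ι : Discrete (pSet C₀) ⥤ C₀) (hι : ι ⋙ γ = 𝟭 (Discrete (pSet C₀))) :
    MuD γ F ≅ inclD γ F ι hι :=
  NatIso.ofComponents
    (fun d => DPb.isoMk
      (nonempty_iso_of_obj_eq hγ (Functor.congr_obj hι (γ.obj (F.obj d))).symm).some
      (Iso.refl d))
    (fun g => Prod.ext ((hsub _ _).elim _ _)
      ((Category.comp_id g).trans (Category.id_comp g).symm))

theorem muD_isEquivalence (hsub : ∀ a b : C₀, Subsingleton (a ⟶ b))
    (hγ : ∀ x : C₀, γ.obj x = ⟨Quotient.mk _ x⟩) (F : D ⥤ C₀) :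
    (MuD γ F).IsEquivalence where
  faithful := ⟨fun h => congrArg Prod.snd h⟩
  full := ⟨fun p => ⟨p.2, Prod.ext ((hsub _ _).elim _ _) rfl⟩⟩
  essSurj := ⟨fun a =>
    ⟨a.right, ⟨DPb.isoMk (nonempty_iso_of_obj_eq hγ a.w).some.symm (Iso.refl a.right)⟩⟩⟩

end HomotopicallyDiscrete

section Segal

variable {C₀ C₁ : Type u} [Category.{v} C₀] [Category.{v} C₁]
  (d₀ d₁ : C₁ ⥤ C₀) (γ : C₀ ⥤ Discrete (pSet C₀)) (σ₀ : C₀ ⥤ C₁) (hσ₀ : σ₀ ⋙ d₀ = 𝟭 C₀)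

theorem unitL_comp_mu2 :
    unitL d₀ d₁ σ₀ hσ₀ ⋙ Mu2 d₀ d₁ γ = MuD γ d₁ ⋙ inclSigma d₀ d₁ γ σ₀ hσ₀ :=
  CategoryTheory.Functor.ext (fun _ => rfl) fun _ _ _ =>
    ((Category.id_comp _).trans (Category.comp_id _)).symm

theorem muD_comp_inclSigma_comp_eq_id (ν₂ : DPb (d₀ ⋙ γ) (d₁ ⋙ γ) ⥤ Chain2 d₀ d₁)
    (hμν : Mu2 d₀ d₁ γ ⋙ ν₂ = 𝟭 (Chain2 d₀ d₁))
    (c : Chain2 d₀ d₁ ⥤ C₁) (hunit : unitL d₀ d₁ σ₀ hσ₀ ⋙ c = 𝟭 C₁) :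
    MuD γ d₁ ⋙ inclSigma d₀ d₁ γ σ₀ hσ₀ ⋙ ν₂ ⋙ c = 𝟭 C₁ :=
  calc MuD γ d₁ ⋙ inclSigma d₀ d₁ γ σ₀ hσ₀ ⋙ ν₂ ⋙ c
      = (unitL d₀ d₁ σ₀ hσ₀ ⋙ Mu2 d₀ d₁ γ) ⋙ ν₂ ⋙ c := by rw [unitL_comp_mu2]; rfl
    _ = unitL d₀ d₁ σ₀ hσ₀ ⋙ (Mu2 d₀ d₁ γ ⋙ ν₂) ⋙ c := rfl
    _ = 𝟭 C₁ := by rw [hμν]; exact hunit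

end Segal

theorem stmt_11_general {C₀ C₁ D : Type u} [Category.{v} C₀] [Category.{v} C₁] [Category.{v} D]
    -- `X₀` is homotopically discrete, with discretization `γ`
    (hsub : ∀ a b : C₀, Subsingleton (a ⟶ b))
    (γ : C₀ ⥤ Discrete (pSet C₀)) (hγ : ∀ x : C₀, γ.obj x = ⟨Quotient.mk _ x⟩)
    -- Part 1 data: a functor `F : D ⥤ C₀` and a section `ι` of `γ`
    (F : D ⥤ C₀) (ι : Discrete (pSet C₀) ⥤ C₀) (hι : ι ⋙ γ = 𝟭 (Discrete (pSet C₀)))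
    -- Part 2 data: faces, degeneracy, induced Segal map, its pseudo-inverse, and the
    -- composition `c` with the unit law `c(σ₀ ∂₁, id) = id`
    (d₀ d₁ : C₁ ⥤ C₀) (σ₀ : C₀ ⥤ C₁) (hσ₀ : σ₀ ⋙ d₀ = 𝟭 C₀)
    (ν₂ : DPb (d₀ ⋙ γ) (d₁ ⋙ γ) ⥤ Chain2 d₀ d₁)
    (hμν : Mu2 d₀ d₁ γ ⋙ ν₂ = 𝟭 (Chain2 d₀ d₁))
    (c : Chain2 d₀ d₁ ⥤ C₁) (hunit : unitL d₀ d₁ σ₀ hσ₀ ⋙ c = 𝟭 C₁) :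
    -- Part 1: if the induced Segal map `μ̂₂ : D ⥤ C ×_Z D` is an equivalence, then so
    -- is the inclusion induced by the section `ι`
    ((MuD γ F).IsEquivalence → (inclD γ F ι hι).IsEquivalence) ∧
    -- Part 2: `c ∘ ν₂ ∘ (σ₀, id) : X₀ ×_{X₀ᵈ} X₁ ⥤ X₁` is an equivalence of categories
    (inclSigma d₀ d₁ γ σ₀ hσ₀ ⋙ ν₂ ⋙ c).IsEquivalence := by
  refine ⟨fun _ => Functor.isEquivalence_of_iso (muDIsoInclD hsub hγ F ι hι), ?_⟩
  have := muD_isEquivalence hsub hγ d₁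
  have : (MuD γ d₁ ⋙ inclSigma d₀ d₁ γ σ₀ hσ₀ ⋙ ν₂ ⋙ c).IsEquivalence := by
    rw [muD_comp_inclSigma_comp_eq_id d₀ d₁ γ σ₀ hσ₀ ν₂ hμν c hunit]
    infer_instance
  exact Functor.isEquivalence_of_comp_left (MuD γ d₁) _

theorem stmt_11 {C₀ C₁ D : Type u} [Category.{v} C₀] [Category.{v} C₁] [Category.{v} D]
    -- `X₀` is homotopically discrete, with discretization `γ`
    (hsub : ∀ a b : C₀, Subsingleton (a ⟶ b))
    (hgrp : ∀ (a b : C₀) (f : a ⟶ b), IsIso f)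
    (γ : C₀ ⥤ Discrete (pSet C₀)) (hγ : ∀ x : C₀, γ.obj x = ⟨Quotient.mk _ x⟩)
    -- Part 1 data: a functor `F : D ⥤ C₀` and a section `ι` of `γ`
    (F : D ⥤ C₀) (ι : Discrete (pSet C₀) ⥤ C₀) (hι : ι ⋙ γ = 𝟭 (Discrete (pSet C₀)))
    -- Part 2 data: faces, degeneracy, induced Segal map, its pseudo-inverse, and the
    -- composition `c` with the unit law `c(σ₀ ∂₁, id) = id`
    (d₀ d₁ : C₁ ⥤ C₀) (σ₀ : C₀ ⥤ C₁) (hσ₀ : σ₀ ⋙ d₀ = 𝟭 C₀) (hσ₁ : σ₀ ⋙ d₁ = 𝟭 C₀)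
    (hμeq : (Mu2 d₀ d₁ γ).IsEquivalence)
    (ν₂ : DPb (d₀ ⋙ γ) (d₁ ⋙ γ) ⥤ Chain2 d₀ d₁)
    (hμν : Mu2 d₀ d₁ γ ⋙ ν₂ = 𝟭 (Chain2 d₀ d₁))
    (hνμ : Nonempty (ν₂ ⋙ Mu2 d₀ d₁ γ ≅ 𝟭 (DPb (d₀ ⋙ γ) (d₁ ⋙ γ))))
    (c : Chain2 d₀ d₁ ⥤ C₁) (hunit : unitL d₀ d₁ σ₀ hσ₀ ⋙ c = 𝟭 C₁) :
    -- Part 1: if the induced Segal map `μ̂₂ : D ⥤ C ×_Z D` is an equivalence, then so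
    -- is the inclusion induced by the section `ι`
    ((MuD γ F).IsEquivalence → (inclD γ F ι hι).IsEquivalence) ∧
    -- Part 2: `c ∘ ν₂ ∘ (σ₀, id) : X₀ ×_{X₀ᵈ} X₁ ⥤ X₁` is an equivalence of categories
    (inclSigma d₀ d₁ γ σ₀ hσ₀ ⋙ ν₂ ⋙ c).IsEquivalence :=
  stmt_11_general hsub γ hγ F ι hι d₀ d₁ σ₀ hσ₀ ν₂ hμν c hunit
end
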